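/- arXiv:2404.12434 — 2 statements merged into one kernel-verified Lean document; each statement's English description precedes it below -/
import Mathlib

section
/- Let n ≥ 1, N ≥ 1, let ψ : ℝ^n → ℂ be a C^N function with compact support, let k ∈ ℝ^n with k ≠ 0, and let ε > 0. Then |∫_{ℝ^n} ψ(v) · exp((2πi/ε)⟨k,v⟩) dv| ≤ (ε/(2π‖k‖))^N · μ(tsupport(Dψ)) · sup_{v ∈ ℝ^n} ‖D^N ψ(v)‖, where μ is Lebesgue measure, Dψ denotes the (Fréchet) derivative of ψ, tsupport(Dψ) is the closure of { v : Dψ(v) ≠ 0 }, and ‖D^N ψ(v)‖ is the operator norm of the N-th iterated derivative of ψ at v. -/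
/-!
The oscillatory integral is the Fourier transform `𝓕 ψ w` at `w = -ε⁻¹ • k`. Integrating by parts
`N` times, i.e. the identity `𝓕 (D^N ψ) w = (2πi ⟪w, ·⟫)^N 𝓕 ψ w`, evaluated at `(w, …, w)` gives
`(2π‖w‖)^N ‖𝓕 ψ w‖ ≤ ∫ ‖D^N ψ‖`. Since `N ≥ 1`, `D^N ψ` vanishes off `tsupport Dψ`, so the last
integral is at most `μ (tsupport Dψ) · sup ‖D^N ψ‖`.
-/

open MeasureTheory Real FourierTransform RealInnerProductSpace

section IteratedFDeriv

variable {𝕜 E F : Type*} [NontriviallyNormedField 𝕜] [NormedAddCommGroup E] [NormedSpace 𝕜 E]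
  [NormedAddCommGroup F] [NormedSpace 𝕜 F]

theorem iteratedFDeriv_succ_eq_zero_of_notMem_tsupport_fderiv {f : E → F} {x : E}
    (hx : x ∉ tsupport (fderiv 𝕜 f)) (m : ℕ) : iteratedFDeriv 𝕜 (m + 1) f x = 0 := by
  have h : iteratedFDeriv 𝕜 m (fderiv 𝕜 f) x = 0 :=
    Function.notMem_support.1 fun hx' => hx (support_iteratedFDeriv_subset m hx')
  rw [iteratedFDeriv_succ_eq_comp_right, Function.comp_apply, h, LinearIsometryEquiv.map_zero]

end IteratedFDeriv

theorem integral_norm_le_toReal_measure_mul_iSup_norm {α E : Type*} [MeasurableSpace α]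
    [NormedAddCommGroup E] {μ : Measure α} {g : α → E} {s : Set α} (hs : μ s < ⊤)
    (hg : ∀ x ∉ s, g x = 0) (hbdd : BddAbove (Set.range fun x => ‖g x‖)) :
    ∫ x, ‖g x‖ ∂μ ≤ (μ s).toReal * ⨆ x, ‖g x‖ := by
  rw [← setIntegral_eq_integral_of_forall_compl_eq_zero fun x hx => by simp [hg x hx], mul_comm]
  refine (le_abs_self _).trans ?_
  exact norm_setIntegral_le_of_norm_le_const (f := fun x => ‖g x‖) hs fun x _ => by
    simpa using le_ciSup hbdd x

namespace Real

variable {V E : Type*} [NormedAddCommGroup V] [InnerProductSpace ℝ V] [MeasurableSpace V]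
  [BorelSpace V] [FiniteDimensional ℝ V] [NormedAddCommGroup E] [NormedSpace ℂ E]

theorem integral_mul_exp_inner_div_eq_fourier (f : V → ℂ) (k : V) (ε : ℝ) :
    ∫ v, f v * Complex.exp (2 * π * Complex.I / (ε : ℂ) * ((inner ℝ k v : ℝ) : ℂ)) =
      𝓕 f ((-ε⁻¹) • k) := by
  rw [fourier_eq']
  congr 1 with v
  rw [smul_eq_mul, mul_comm, real_inner_smul_right, real_inner_comm]
  push_cast
  ring_nf

theorem pow_mul_norm_fourier_le_integral_norm_iteratedFDeriv [CompleteSpace E] {f : V → E}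
    {N : ℕ} (hf : ContDiff ℝ N f) (hf_int : ∀ m ≤ N, Integrable (iteratedFDeriv ℝ m f))
    (w : V) : (2 * π * ‖w‖) ^ N * ‖𝓕 f w‖ ≤ ∫ v, ‖iteratedFDeriv ℝ N f v‖ := by
  have hnorm : ‖𝓕 (iteratedFDeriv ℝ N f) w (fun _ => w)‖ =
      ‖w‖ ^ N * ((2 * π * ‖w‖) ^ N * ‖𝓕 f w‖) := by
    rw [congrFun (fourier_iteratedFDeriv (N := (N : ℕ∞)) hf (fun m hm => hf_int m (mod_cast hm))
      le_rfl) w, VectorFourier.fourierPowSMulRight_apply]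
    have hww : innerSL ℝ w w = ‖w‖ ^ 2 := real_inner_self_eq_norm_sq w
    simp only [neg_apply, hww, Finset.prod_const, Finset.card_univ, Fintype.card_fin, norm_smul,
      norm_pow, norm_neg, Complex.norm_mul, Complex.norm_ofNat, Complex.norm_real, norm_eq_abs,
      abs_of_pos pi_pos, Complex.norm_I, mul_one, abs_norm]
    ring
  rcases eq_or_ne w 0 with rfl | hw
  · rcases N.eq_zero_or_pos with rfl | hN
    · simp only [pow_zero, one_mul, norm_iteratedFDeriv_zero]
      exact VectorFourier.norm_fourierIntegral_le_integral_norm _ _ _ _ _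
    · simpa [zero_pow hN.ne'] using integral_nonneg fun v => norm_nonneg _
  refine le_of_mul_le_mul_left ?_ (pow_pos (norm_pos_iff.2 hw) N)
  calc ‖w‖ ^ N * ((2 * π * ‖w‖) ^ N * ‖𝓕 f w‖)
      = ‖𝓕 (iteratedFDeriv ℝ N f) w (fun _ => w)‖ := hnorm.symm
    _ ≤ ‖𝓕 (iteratedFDeriv ℝ N f) w‖ * ∏ _ : Fin N, ‖w‖ :=
        ContinuousMultilinearMap.le_opNorm _ _
    _ ≤ ‖w‖ ^ N * ∫ v, ‖iteratedFDeriv ℝ N f v‖ := by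
        rw [Finset.prod_const, Finset.card_fin, mul_comm]
        gcongr
        exact VectorFourier.norm_fourierIntegral_le_integral_norm _ _ _ _ _

end Real

theorem oscillatory_integral_decay_general {n : ℕ} (N : ℕ) (hN : 1 ≤ N)
    (ψ : EuclideanSpace ℝ (Fin n) → ℂ) (hψ : ContDiff ℝ N ψ)
    (hsupp : HasCompactSupport ψ)
    (k : EuclideanSpace ℝ (Fin n)) (hk : k ≠ 0) (ε : ℝ) (hε : 0 < ε) :
    ‖∫ v, ψ v * Complex.exp (2 * Real.pi * Complex.I / (ε : ℂ) * ((inner ℝ k v : ℝ) : ℂ))‖ ≤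
      (ε / (2 * Real.pi * ‖k‖)) ^ N *
        (volume (tsupport (fderiv ℝ ψ))).toReal *
        ⨆ v : EuclideanSpace ℝ (Fin n), ‖iteratedFDeriv ℝ N ψ v‖ := by
  have hint : ∀ m ≤ N, Integrable (iteratedFDeriv ℝ m ψ) :=
    fun m hm => (hψ.continuous_iteratedFDeriv (mod_cast hm)).integrable_of_hasCompactSupport
      (hsupp.iteratedFDeriv m)
  have hbdd : BddAbove (Set.range fun v => ‖iteratedFDeriv ℝ N ψ v‖) :=
    (hψ.continuous_iteratedFDeriv le_rfl).norm.bddAbove_range_of_hasCompactSupport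
      (hsupp.iteratedFDeriv N).norm
  have hvol : volume (tsupport (fderiv ℝ ψ)) < ⊤ :=
    (hsupp.fderiv (𝕜 := ℝ)).measure_lt_top
  have hvanish : ∀ v ∉ tsupport (fderiv ℝ ψ), iteratedFDeriv ℝ N ψ v = 0 := by
    obtain ⟨m, rfl⟩ := Nat.exists_eq_add_of_le' hN
    exact fun v hv => iteratedFDeriv_succ_eq_zero_of_notMem_tsupport_fderiv hv m
  have hw : 2 * π * ‖(-ε⁻¹) • k‖ = (ε / (2 * π * ‖k‖))⁻¹ := by
    rw [norm_smul, norm_neg, norm_inv, Real.norm_of_nonneg hε.le]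
    field_simp
  rw [Real.integral_mul_exp_inner_div_eq_fourier, mul_assoc]
  calc ‖𝓕 ψ ((-ε⁻¹) • k)‖
      = (ε / (2 * π * ‖k‖)) ^ N * ((2 * π * ‖(-ε⁻¹) • k‖) ^ N * ‖𝓕 ψ ((-ε⁻¹) • k)‖) := by
        rw [hw, ← mul_assoc, ← mul_pow, mul_inv_cancel₀ (by positivity), one_pow, one_mul]
    _ ≤ (ε / (2 * π * ‖k‖)) ^ N * ∫ v, ‖iteratedFDeriv ℝ N ψ v‖ := by
        gcongr
        exact Real.pow_mul_norm_fourier_le_integral_norm_iteratedFDeriv hψ hint _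
    _ ≤ _ := by
        gcongr
        exact integral_norm_le_toReal_measure_mul_iSup_norm hvol hvanish hbdd

/-- Decay of oscillatory integrals: for a compactly supported `C^N` function `ψ : ℝⁿ → ℂ`,
a nonzero frequency `k` and `ε > 0`,
`|∫ ψ(v) e^{(2πi/ε)⟨k,v⟩} dv| ≤ (ε/(2π‖k‖))^N · μ(tsupport Dψ) · sup_v ‖D^N ψ(v)‖`. -/
theorem oscillatory_integral_decay {n : ℕ} (hn : 1 ≤ n) (N : ℕ) (hN : 1 ≤ N)
    (ψ : EuclideanSpace ℝ (Fin n) → ℂ) (hψ : ContDiff ℝ N ψ)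
    (hsupp : HasCompactSupport ψ)
    (k : EuclideanSpace ℝ (Fin n)) (hk : k ≠ 0) (ε : ℝ) (hε : 0 < ε) :
    ‖∫ v, ψ v * Complex.exp (2 * Real.pi * Complex.I / (ε : ℂ) * ((inner ℝ k v : ℝ) : ℂ))‖ ≤
      (ε / (2 * Real.pi * ‖k‖)) ^ N *
        (volume (tsupport (fderiv ℝ ψ))).toReal *
        ⨆ v : EuclideanSpace ℝ (Fin n), ‖iteratedFDeriv ℝ N ψ v‖ :=
  oscillatory_integral_decay_general N hN ψ hψ hsupp k hk ε hε
end

section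
/- Let f : ℝ^n → ℝ be ℤ^n-periodic (f(x+m) = f(x) for all x ∈ ℝ^n and m ∈ ℤ^n) and integrable on the unit cube [0,1]^n, and let U ⊆ ℝ^n be an open set. Then for every ε > 0, ∫_U |f(x/ε)| dx ≤ (∫_{[0,1]^n} |f(y)| dy) · μ(U_{√n·ε}), where μ is Lebesgue measure and U_r = { y ∈ ℝ^n : dist(y,U) ≤ r } is the closed r-neighborhood of U. -/
/-!
Tile `ℝⁿ` by the cells `ε • (m + [0,1)ⁿ)`, `m ∈ ℤⁿ`. By periodicity and the scaling of Lebesgue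
measure, the integral of `|f(x/ε)|` over a cell is its volume `εⁿ` times `∫_{[0,1)ⁿ} |f|`. The cells
meeting `U` cover `U`, have diameter at most `√n ε`, and are disjoint, so they fit into the closed
`√n ε`-neighbourhood of `U` and their total volume is at most `μ(U_{√n ε})`.
-/

open MeasureTheory

/-- The closed unit cube `[0,1]ⁿ` in Euclidean space. -/
def unitCube (n : ℕ) : Set (EuclideanSpace ℝ (Fin n)) :=
  {y | ∀ i, y i ∈ Set.Icc (0 : ℝ) 1}

open Metric Module Set
open scoped ENNReal

theorem setLIntegral_le_tsum_of_subset_iUnion {α ι : Type*} [MeasurableSpace α] {μ : Measure α}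
    [Countable ι] (f : α → ℝ≥0∞) {s : Set α} {C : ι → Set α} (hs : s ⊆ ⋃ i, C i) :
    ∫⁻ x in s, f x ∂μ ≤ ∑' i : {i // (s ∩ C i).Nonempty}, ∫⁻ x in C i, f x ∂μ := by
  have hcover : s ⊆ ⋃ i : {i // (s ∩ C i).Nonempty}, C i := fun x hx ↦ by
    obtain ⟨i, hi⟩ := mem_iUnion.1 (hs hx)
    exact mem_iUnion.2 ⟨⟨i, x, hx, hi⟩, hi⟩
  exact (lintegral_mono_set hcover).trans (lintegral_iUnion_le _ _)

theorem subset_cthickening_of_forall_dist_le {X : Type*} [PseudoMetricSpace X] {s t : Set X}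
    {r : ℝ} (hst : (s ∩ t).Nonempty) (ht : ∀ x ∈ t, ∀ y ∈ t, dist x y ≤ r) :
    t ⊆ cthickening r s := by
  obtain ⟨y, hys, hyt⟩ := hst
  exact fun x hx ↦ mem_cthickening_of_dist_le x y r s hys (ht x hx y hyt)

theorem setLIntegral_preimage_inv_smul {E : Type*} [NormedAddCommGroup E] [NormedSpace ℝ E]
    [MeasurableSpace E] [BorelSpace E] [FiniteDimensional ℝ E] (μ : Measure E)
    [μ.IsAddHaarMeasure] {r : ℝ} (hr : r ≠ 0) (g : E → ℝ≥0∞) (s : Set E) :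
    ∫⁻ x in (r⁻¹ • ·) ⁻¹' s, g (r⁻¹ • x) ∂μ =
      ENNReal.ofReal (|r| ^ finrank ℝ E) * ∫⁻ y in s, g y ∂μ := by
  have hmap : MeasurePreserving (r⁻¹ • · : E → E) μ (ENNReal.ofReal (|r| ^ finrank ℝ E) • μ) := by
    refine ⟨measurable_const_smul _, ?_⟩
    rw [Measure.map_addHaar_smul μ (inv_ne_zero hr)]
    simp
  rw [hmap.setLIntegral_comp_preimage_emb
    (Homeomorph.smulOfNeZero _ (inv_ne_zero hr)).measurableEmbedding, Measure.restrict_smul,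
    lintegral_smul_measure, smul_eq_mul]

section IntCube

variable {n : ℕ} {ε : ℝ}

def intCube (m : Fin n → ℤ) : Set (EuclideanSpace ℝ (Fin n)) :=
  {y | ∀ i, y i ∈ Ico (m i : ℝ) (m i + 1)}

noncomputable def intVec (m : Fin n → ℤ) : EuclideanSpace ℝ (Fin n) :=
  (EuclideanSpace.equiv (Fin n) ℝ).symm fun i ↦ (m i : ℝ)

theorem intCube_eq_preimage_ofLp (m : Fin n → ℤ) :
    intCube m = WithLp.ofLp ⁻¹' univ.pi fun i ↦ Ico (m i : ℝ) (m i + 1) := by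
  ext y
  simp [intCube]

theorem measurableSet_intCube (m : Fin n → ℤ) : MeasurableSet (intCube m) := by
  rw [intCube_eq_preimage_ofLp]
  exact (PiLp.volume_preserving_ofLp _).measurable (.univ_pi fun _ ↦ measurableSet_Ico)

theorem volume_intCube (m : Fin n → ℤ) : volume (intCube m) = 1 := by
  rw [intCube_eq_preimage_ofLp, (PiLp.volume_preserving_ofLp _).measure_preimage
    (MeasurableSet.univ_pi fun _ ↦ measurableSet_Ico).nullMeasurableSet, volume_pi_pi]
  simp

theorem pairwise_disjoint_intCube : Pairwise (Function.onFun Disjoint (intCube (n := n))) := by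
  refine fun m m' hne ↦ disjoint_left.2 fun y hy hy' ↦ hne (funext fun i ↦ ?_)
  rw [← Int.floor_eq_iff.2 (hy i), Int.floor_eq_iff.2 (hy' i)]

theorem iUnion_intCube : ⋃ m, intCube m = (univ : Set (EuclideanSpace ℝ (Fin n))) :=
  eq_univ_of_forall fun y ↦
    mem_iUnion.2 ⟨fun i ↦ ⌊y i⌋, fun _ ↦ ⟨Int.floor_le _, Int.lt_floor_add_one _⟩⟩

theorem dist_le_sqrt_of_mem_intCube {m : Fin n → ℤ} {y z : EuclideanSpace ℝ (Fin n)}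
    (hy : y ∈ intCube m) (hz : z ∈ intCube m) : dist y z ≤ √n := by
  rw [EuclideanSpace.dist_eq]
  refine Real.sqrt_le_sqrt ?_
  calc ∑ i, dist (y i) (z i) ^ 2 ≤ ∑ _i : Fin n, (1 : ℝ) := by
        refine Finset.sum_le_sum fun i _ ↦ ?_
        obtain ⟨⟨hy₁, hy₂⟩, ⟨hz₁, hz₂⟩⟩ := And.intro (hy i) (hz i)
        have hyz : |y i - z i| ≤ 1 := abs_le.2 ⟨by linarith, by linarith⟩
        simpa [Real.dist_eq] using hyz
    _ = n := by simp

theorem intCube_zero_subset_unitCube : intCube (0 : Fin n → ℤ) ⊆ unitCube n :=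
  fun y hy i ↦ by simpa using Ico_subset_Icc_self (by simpa using hy i)

theorem preimage_add_intVec_intCube (m : Fin n → ℤ) :
    (· + intVec m) ⁻¹' intCube m = intCube 0 := by
  ext y
  simp [intCube, intVec, add_comm _ (1 : ℝ)]

theorem setLIntegral_intCube_eq_of_periodic {g : EuclideanSpace ℝ (Fin n) → ℝ≥0∞}
    (hg : ∀ x m, g (x + intVec m) = g x) (m : Fin n → ℤ) :
    ∫⁻ x in intCube m, g x = ∫⁻ x in intCube 0, g x := by
  rw [← (measurePreserving_add_right volume (intVec m)).setLIntegral_comp_preimage_emb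
    (measurableEmbedding_addRight _), preimage_add_intVec_intCube]
  simp only [hg]

theorem setLIntegral_preimage_inv_smul_intCube_le {g : EuclideanSpace ℝ (Fin n) → ℝ≥0∞}
    (hg : ∀ x m, g (x + intVec m) = g x) (hε : ε ≠ 0) (m : Fin n → ℤ) :
    ∫⁻ x in (ε⁻¹ • ·) ⁻¹' intCube m, g (ε⁻¹ • x) ≤
      volume ((ε⁻¹ • ·) ⁻¹' intCube m) * ∫⁻ y in unitCube n, g y := by
  have hvol := setLIntegral_preimage_inv_smul volume hε (fun _ ↦ 1) (intCube m)
  simp only [setLIntegral_one, volume_intCube, mul_one] at hvol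
  rw [setLIntegral_preimage_inv_smul volume hε, hvol, setLIntegral_intCube_eq_of_periodic hg]
  gcongr
  exact intCube_zero_subset_unitCube

theorem dist_le_of_inv_smul_mem_intCube (hε : 0 < ε) {m : Fin n → ℤ}
    {x y : EuclideanSpace ℝ (Fin n)} (hx : ε⁻¹ • x ∈ intCube m) (hy : ε⁻¹ • y ∈ intCube m) :
    dist x y ≤ √n * ε := by
  have h := dist_le_sqrt_of_mem_intCube hx hy
  rw [dist_smul₀, norm_inv, Real.norm_of_nonneg hε.le, inv_mul_le_iff₀ hε] at h
  linarith

end IntCube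

theorem periodic_oscillating_integral_bound_general {n : ℕ}
    (f : EuclideanSpace ℝ (Fin n) → ℝ)
    (hper : ∀ (x : EuclideanSpace ℝ (Fin n)) (m : Fin n → ℤ),
      f (x + (EuclideanSpace.equiv (Fin n) ℝ).symm (fun i => (m i : ℝ))) = f x)
    (U : Set (EuclideanSpace ℝ (Fin n))) (ε : ℝ) (hε : 0 < ε) :
    ∫⁻ x in U, ENNReal.ofReal |f (ε⁻¹ • x)| ≤
      (∫⁻ y in unitCube n, ENNReal.ofReal |f y|) *
        volume (Metric.cthickening (Real.sqrt n * ε) U) := by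
  set J := ∫⁻ y in unitCube n, ENNReal.ofReal |f y|
  have hg : ∀ x m, ENNReal.ofReal |f (x + intVec m)| = ENNReal.ofReal |f x| :=
    fun x m ↦ by rw [intVec, hper]
  set C : (Fin n → ℤ) → Set (EuclideanSpace ℝ (Fin n)) := fun m ↦ (ε⁻¹ • ·) ⁻¹' intCube m
  have hcover : U ⊆ ⋃ m, C m := by simp [C, ← preimage_iUnion, iUnion_intCube]
  calc ∫⁻ x in U, ENNReal.ofReal |f (ε⁻¹ • x)|
      ≤ ∑' m : {m // (U ∩ C m).Nonempty}, ∫⁻ x in C m, ENNReal.ofReal |f (ε⁻¹ • x)| :=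
        setLIntegral_le_tsum_of_subset_iUnion _ hcover
    _ ≤ ∑' m : {m // (U ∩ C m).Nonempty}, volume (C m) * J :=
        ENNReal.tsum_le_tsum fun m ↦
          setLIntegral_preimage_inv_smul_intCube_le (g := fun y ↦ ENNReal.ofReal |f y|) hg hε.ne' m
    _ = (∑' m : {m // (U ∩ C m).Nonempty}, volume (C m)) * J := ENNReal.tsum_mul_right
    _ ≤ volume (⋃ m : {m // (U ∩ C m).Nonempty}, C m) * J := by
        gcongr
        exact tsum_meas_le_meas_iUnion_of_disjoint _
          (fun m ↦ (measurableSet_intCube (m : Fin n → ℤ)).preimage (measurable_const_smul ε⁻¹))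
          fun a b hab ↦ (pairwise_disjoint_intCube (Subtype.coe_injective.ne hab)).preimage _
    _ ≤ volume (cthickening (√n * ε) U) * J := by
        gcongr
        exact iUnion_subset fun m ↦ subset_cthickening_of_forall_dist_le m.2
          fun x hx y hy ↦ dist_le_of_inv_smul_mem_intCube hε hx hy
    _ = J * volume (cthickening (√n * ε) U) := mul_comm _ _

/-- For a `ℤⁿ`-periodic function `f` integrable on the unit cube and an open set `U`,
`∫_U |f(x/ε)| dx ≤ (∫_{[0,1]ⁿ} |f|) · μ(U_{√n·ε})`, where `U_r` is the closed
`r`-neighborhood of `U`. -/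
theorem periodic_oscillating_integral_bound {n : ℕ}
    (f : EuclideanSpace ℝ (Fin n) → ℝ)
    (hper : ∀ (x : EuclideanSpace ℝ (Fin n)) (m : Fin n → ℤ),
      f (x + (EuclideanSpace.equiv (Fin n) ℝ).symm (fun i => (m i : ℝ))) = f x)
    (hint : IntegrableOn f (unitCube n))
    (U : Set (EuclideanSpace ℝ (Fin n))) (hU : IsOpen U) (ε : ℝ) (hε : 0 < ε) :
    ∫⁻ x in U, ENNReal.ofReal |f (ε⁻¹ • x)| ≤
      (∫⁻ y in unitCube n, ENNReal.ofReal |f y|) *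
        volume (Metric.cthickening (Real.sqrt n * ε) U) :=
  periodic_oscillating_integral_bound_general f hper U ε hε
end
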